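/- arXiv:1611.10340 — 3 statements merged into one kernel-verified Lean document; each statement's English description precedes it below -/
import Mathlib

section
/- Let R be a commutative ring, n a natural number, and M an (n+2)×(n+2) matrix over R. Then det(M) · det(M''), where M'' is the n×n matrix obtained from M by deleting both the first and last rows and the first and last columns, equals det(M minus its first row and first column) · det(M minus its last row and last column) − det(M minus its first row and last column) · det(M minus its last row and first column). (When n = 0 the empty 0×0 determinant is 1.) -/
/-!
Multiplying `M` on the right by the identity matrix whose first and last columns are replaced by
those of `adjugate M` gives a block-triangular matrix with diagonal blocks `det M • 1` (of size 2)
and `M''`. Taking determinants, `det M * det A = det M ^ 2 * det M''`, where `A` is the `2 × 2`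
matrix of corner entries of `adjugate M`. Cancelling `det M` is legitimate for the generic matrix
over `ℤ[X_ij]`, which specialises to every `M`. Finally, the corner entries of `adjugate M` are
the four minors of the statement, up to signs that cancel in pairs.
-/

open Matrix

section JacobiComplementaryMinor

variable {k m R : Type*} [Fintype k] [Fintype m] [DecidableEq k] [DecidableEq m] [CommRing R]

theorem mul_fromBlocks_toBlocks_adjugate (M : Matrix (k ⊕ m) (k ⊕ m) R) :
    M * fromBlocks (adjugate M).toBlocks₁₁ 0 (adjugate M).toBlocks₂₁ 1 =
      fromBlocks (M.det • 1) M.toBlocks₁₂ 0 M.toBlocks₂₂ := by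
  have h a b := congrFun (congrFun (mul_adjugate M) a) b
  simp only [mul_apply, Fintype.sum_sum_type, Matrix.smul_apply] at h
  ext (i | i) (j | j) <;>
    simp [mul_apply, Fintype.sum_sum_type, toBlocks₁₁, toBlocks₂₁, toBlocks₁₂, toBlocks₂₂,
      h, one_apply]

theorem det_mul_det_toBlocks₁₁_adjugate (M : Matrix (k ⊕ m) (k ⊕ m) R) :
    M.det * (adjugate M).toBlocks₁₁.det = M.det ^ Fintype.card k * M.toBlocks₂₂.det := by
  simpa [det_fromBlocks_zero₁₂, det_fromBlocks_zero₂₁] using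
    congrArg det (mul_fromBlocks_toBlocks_adjugate M)

theorem det_toBlocks₁₁_adjugate [Nonempty k] (M : Matrix (k ⊕ m) (k ⊕ m) R) :
    (adjugate M).toBlocks₁₁.det = M.det ^ (Fintype.card k - 1) * M.toBlocks₂₂.det := by
  let X := mvPolynomialX (k ⊕ m) (k ⊕ m) ℤ
  suffices (adjugate X).toBlocks₁₁.det = X.det ^ (Fintype.card k - 1) * X.toBlocks₂₂.det by
    have h := congrArg (MvPolynomial.aeval fun p => M p.1 p.2) this
    rw [map_mul, map_pow, AlgHom.map_det, AlgHom.map_det, AlgHom.map_det] at h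
    rwa [← mvPolynomialX_mapMatrix_aeval ℤ M, ← AlgHom.map_adjugate]
  apply mul_left_cancel₀ (det_mvPolynomialX_ne_zero (k ⊕ m) ℤ)
  rw [det_mul_det_toBlocks₁₁_adjugate, ← mul_assoc, ← pow_succ',
    Nat.sub_add_cancel Fintype.card_pos]

end JacobiComplementaryMinor

theorem finEndsSumInner_bijective (n : ℕ) :
    (Sum.elim ![0, Fin.last (n + 1)] fun i : Fin n => i.succ.castSucc).Bijective := by
  rw [Fintype.bijective_iff_injective_and_card]
  refine ⟨?_, by simp; omega⟩
  rintro (a | a) (b | b) h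
  · fin_cases a <;> fin_cases b <;> simp [Fin.ext_iff] at h ⊢
  · fin_cases a <;> simp [Fin.ext_iff] at h
    omega
  · fin_cases b <;> simp [Fin.ext_iff] at h
    omega
  · simpa [Fin.ext_iff] using h

noncomputable def finEndsSumInnerEquiv (n : ℕ) : Fin 2 ⊕ Fin n ≃ Fin (n + 2) :=
  .ofBijective _ (finEndsSumInner_bijective n)

theorem adjugate_corners_det_eq {R : Type*} [CommRing R] {n : ℕ}
    (M : Matrix (Fin (n + 2)) (Fin (n + 2)) R) :
    adjugate M 0 0 * adjugate M (Fin.last _) (Fin.last _)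
        - adjugate M 0 (Fin.last _) * adjugate M (Fin.last _) 0
      = (M.submatrix Fin.succ Fin.succ).det * (M.submatrix Fin.castSucc Fin.castSucc).det
        - (M.submatrix Fin.succ Fin.castSucc).det * (M.submatrix Fin.castSucc Fin.succ).det := by
  simp only [adjugate_fin_succ_eq_det_submatrix, Fin.succAbove_zero, Fin.succAbove_last,
    Fin.val_zero, Fin.val_last]
  ring_nf
  simp [pow_mul']

/-- The Desnanot–Jacobi (Dodgson condensation) identity over a commutative ring. -/
theorem desnanot_jacobi
    (R : Type*) [CommRing R] (n : ℕ) (M : Matrix (Fin (n + 2)) (Fin (n + 2)) R) :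
    M.det *
      (M.submatrix (fun i : Fin n => i.succ.castSucc)
        (fun j : Fin n => j.succ.castSucc)).det
    = (M.submatrix Fin.succ Fin.succ).det *
        (M.submatrix Fin.castSucc Fin.castSucc).det
      - (M.submatrix Fin.succ Fin.castSucc).det *
          (M.submatrix Fin.castSucc Fin.succ).det := by
  let e := finEndsSumInnerEquiv n
  have h := det_toBlocks₁₁_adjugate (M.submatrix e e)
  rw [adjugate_submatrix_equiv_self, det_submatrix_equiv_self, det_fin_two, Fintype.card_fin,
    Nat.add_one_sub_one, pow_one] at h
  rw [← adjugate_corners_det_eq]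
  exact h.symm
end

section
/- Let R be a commutative ring and c : ℤ × ℤ → R. For integers k ≥ 1 and α, β ∈ ℤ define τ_k^{(α,β)} = det of the k×k matrix whose (i,j) entry (0 ≤ i,j ≤ k−1) is c(−β+j, α+i); set τ_0^{(α,β)} = 1 and τ_{−1}^{(α,β)} = 0. Then for all k ≥ 0 and all α, β ∈ ℤ: τ_{k+1}^{(α,β+1)} · τ_{k−1}^{(α+1,β)} = τ_k^{(α+1,β)} · τ_k^{(α,β+1)} − τ_k^{(α,β)} · τ_k^{(α+1,β+1)}. -/
/-!
The tau-functions occurring in the 2T-system are all minors of the single matrix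
`M = (c (-(β + 1) + j, α + i))_{0 ≤ i, j ≤ k}` of `τ_{k+1}^{(α,β+1)}`: dropping the first row shifts
`α` by one, dropping the last column leaves `β + 1` alone, dropping the first column turns
`β + 1` into `β`, and the interior of `M` is the matrix of `τ_{k-1}^{(α+1,β)}`. The 2T-system is
therefore the Desnanot–Jacobi identity (Dodgson condensation) for `M`.

Desnanot–Jacobi is the `2 × 2` case of Jacobi's theorem on complementary minors of the adjugate:
for `A` in block form over `m ⊕ n`, multiplying `A` by the block lower triangular matrix whose
first block column is that of `adj A` gives a block upper triangular matrix with diagonal blocks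
`det A • 1` and `A₂₂`, so `det A * det (adj A)₁₁ = (det A) ^ |m| * det A₂₂`. The factor `det A`
cancels for the generic matrix over `ℤ[X_ij]`, and the identity specializes to any commutative ring.
-/

/-- The `GL∞^(2)` tau-function: the `k × k` determinant with `(i,j)` entry
`c (-β + j, α + i)` for `k ≥ 0` (so `τ_0 = 1`), and `0` for `k < 0`. -/
noncomputable def tau2T {R : Type*} [CommRing R] (c : ℤ × ℤ → R) (k α β : ℤ) : R :=
  if k < 0 then 0
  else Matrix.det
    (Matrix.of fun i j : Fin k.toNat => c (-β + ((j : ℕ) : ℤ), α + ((i : ℕ) : ℤ)))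

def finEndsSumInteriorEquiv (n : ℕ) : Fin 2 ⊕ Fin n ≃ Fin (n + 2) where
  toFun := Sum.elim ![0, Fin.last (n + 1)] fun i => i.castSucc.succ
  invFun k :=
    if h₀ : k = 0 then .inl 0 else if hl : k = Fin.last (n + 1) then .inl 1
    else .inr ⟨k - 1, by simp only [Fin.ext_iff, Fin.val_zero, Fin.val_last] at h₀ hl; omega⟩
  left_inv := by
    rintro (i | i)
    · fin_cases i <;> simp [Fin.ext_iff]
    · simp [Fin.ext_iff, i.isLt.ne]
  right_inv k := by
    dsimp only
    split_ifs with h₀ hl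
    · simp [h₀]
    · simp [hl]
    · simp only [Fin.ext_iff, Fin.val_zero, Fin.val_last] at h₀ hl
      ext; simp; omega

open Matrix

namespace Matrix

variable {m n R : Type*} [Fintype m] [Fintype n] [DecidableEq m] [DecidableEq n] [CommRing R]

theorem det_mul_det_toBlocks₁₁_adjugate (A : Matrix (m ⊕ n) (m ⊕ n) R) :
    A.det * A.adjugate.toBlocks₁₁.det = A.det ^ Fintype.card m * A.toBlocks₂₂.det := by
  set P := A.adjugate
  have hAP : A * P = A.det • 1 := A.mul_adjugate
  rw [← fromBlocks_one, fromBlocks_smul, smul_zero] at hAP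
  conv_lhs at hAP => rw [← fromBlocks_toBlocks A, ← fromBlocks_toBlocks P, fromBlocks_multiply]
  obtain ⟨h₁₁, -, h₂₁, -⟩ := fromBlocks_inj.mp hAP
  calc A.det * P.toBlocks₁₁.det
      = (A * fromBlocks P.toBlocks₁₁ 0 P.toBlocks₂₁ 1).det := by
        rw [det_mul, det_fromBlocks_zero₁₂, det_one, mul_one]
    _ = (fromBlocks (A.det • 1) A.toBlocks₁₂ 0 A.toBlocks₂₂).det := by
        conv_lhs => rw [← fromBlocks_toBlocks A]
        rw [fromBlocks_multiply, h₁₁, h₂₁]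
        simp
    _ = A.det ^ Fintype.card m * A.toBlocks₂₂.det := by
        rw [det_fromBlocks_zero₂₁, det_smul, det_one, mul_one]

theorem det_toBlocks₁₁_adjugate [Nonempty m] (A : Matrix (m ⊕ n) (m ⊕ n) R) :
    A.adjugate.toBlocks₁₁.det = A.det ^ (Fintype.card m - 1) * A.toBlocks₂₂.det := by
  let X := mvPolynomialX (m ⊕ n) (m ⊕ n) ℤ
  suffices hX : X.adjugate.toBlocks₁₁.det = X.det ^ (Fintype.card m - 1) * X.toBlocks₂₂.det by
    let φ := MvPolynomial.aeval (R := ℤ) fun p : (m ⊕ n) × (m ⊕ n) => A p.1 p.2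
    have hφ := congrArg φ hX
    rw [map_mul, map_pow, φ.map_det, φ.map_det, φ.map_det] at hφ
    rw [← mvPolynomialX_mapMatrix_aeval ℤ A, ← AlgHom.map_adjugate]
    exact hφ
  apply mul_left_cancel₀ (det_mvPolynomialX_ne_zero (m ⊕ n) ℤ)
  rw [det_mul_det_toBlocks₁₁_adjugate, ← mul_assoc, ← pow_succ',
    Nat.sub_add_cancel Fintype.card_pos]

theorem desnanot_jacobi {n : ℕ} (M : Matrix (Fin (n + 2)) (Fin (n + 2)) R) :
    M.det * (M.submatrix (Fin.succ ∘ Fin.castSucc) (Fin.succ ∘ Fin.castSucc)).det =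
      (M.submatrix Fin.succ Fin.succ).det * (M.submatrix Fin.castSucc Fin.castSucc).det -
        (M.submatrix Fin.castSucc Fin.succ).det * (M.submatrix Fin.succ Fin.castSucc).det := by
  set e := finEndsSumInteriorEquiv n
  have h := det_toBlocks₁₁_adjugate (M.submatrix e e)
  have hinterior : (M.submatrix e e).toBlocks₂₂ =
      M.submatrix (Fin.succ ∘ Fin.castSucc) (Fin.succ ∘ Fin.castSucc) := rfl
  rw [adjugate_submatrix_equiv_self, det_submatrix_equiv_self, det_fin_two, hinterior,
    Fintype.card_fin, Nat.add_one_sub_one, pow_one] at h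
  simp only [toBlocks₁₁, e, finEndsSumInteriorEquiv, Equiv.coe_fn_mk, submatrix_apply, of_apply,
    Sum.elim_inl, cons_val_zero, cons_val_one, cons_val_fin_one, adjugate_fin_succ_eq_det_submatrix,
    Fin.succAbove_zero, Fin.succAbove_last, Fin.val_zero, Fin.val_last, add_zero, zero_add,
    pow_zero, one_mul, Even.add_self, Even.neg_pow, one_pow] at h
  have hsign : (-1 : R) ^ (n + 1) * (-1) ^ (n + 1) = 1 := by rw [← mul_pow]; norm_num
  linear_combination -h - (M.submatrix Fin.castSucc Fin.succ).det *
    (M.submatrix Fin.succ Fin.castSucc).det * hsign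

end Matrix

section TauMatrix

variable {R : Type*} (c : ℤ × ℤ → R) (m : ℕ) (α β : ℤ)

def tauMatrix : Matrix (Fin m) (Fin m) R :=
  of fun i j => c (-β + ((j : ℕ) : ℤ), α + ((i : ℕ) : ℤ))

theorem tau2T_natCast [CommRing R] : tau2T c m α β = (tauMatrix c m α β).det := by
  rw [tau2T, if_neg (by omega)]
  rfl

theorem tauMatrix_submatrix_succ_succ :
    (tauMatrix c (m + 1) α (β + 1)).submatrix Fin.succ Fin.succ = tauMatrix c m (α + 1) β := by
  ext i j
  simp only [tauMatrix, submatrix_apply, of_apply, Fin.val_succ, Nat.cast_succ]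
  ring_nf

theorem tauMatrix_submatrix_castSucc_castSucc :
    (tauMatrix c (m + 1) α β).submatrix Fin.castSucc Fin.castSucc = tauMatrix c m α β :=
  rfl

theorem tauMatrix_submatrix_castSucc_succ :
    (tauMatrix c (m + 1) α (β + 1)).submatrix Fin.castSucc Fin.succ = tauMatrix c m α β := by
  ext i j
  simp only [tauMatrix, submatrix_apply, of_apply, Fin.val_succ, Fin.val_castSucc, Nat.cast_succ]
  ring_nf

theorem tauMatrix_submatrix_succ_castSucc :
    (tauMatrix c (m + 1) α β).submatrix Fin.succ Fin.castSucc = tauMatrix c m (α + 1) β := by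
  ext i j
  simp only [tauMatrix, submatrix_apply, of_apply, Fin.val_succ, Fin.val_castSucc, Nat.cast_succ]
  ring_nf

theorem det_tauMatrix_tSystem [CommRing R] :
    (tauMatrix c (m + 2) α (β + 1)).det * (tauMatrix c m (α + 1) β).det =
      (tauMatrix c (m + 1) (α + 1) β).det * (tauMatrix c (m + 1) α (β + 1)).det -
        (tauMatrix c (m + 1) α β).det * (tauMatrix c (m + 1) (α + 1) (β + 1)).det := by
  have h := desnanot_jacobi (tauMatrix c (m + 2) α (β + 1))
  rwa [← submatrix_submatrix, tauMatrix_submatrix_succ_succ,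
    tauMatrix_submatrix_castSucc_castSucc, tauMatrix_submatrix_castSucc_succ,
    tauMatrix_submatrix_succ_castSucc] at h

end TauMatrix

/-- The tau-functions `τ_k^{(α,β)}` satisfy the 2T-system (the type A T-system). -/
theorem tau2T_system
    (R : Type*) [CommRing R] (c : ℤ × ℤ → R) :
    ∀ k : ℤ, 0 ≤ k → ∀ α β : ℤ,
      tau2T c (k + 1) α (β + 1) * tau2T c (k - 1) (α + 1) β
      = tau2T c k (α + 1) β * tau2T c k α (β + 1)
        - tau2T c k α β * tau2T c k (α + 1) (β + 1) := by
  intro k hk α β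
  obtain ⟨m, rfl⟩ := Int.eq_ofNat_of_zero_le hk
  rcases m with _ | m
  · simp [tau2T]
  · have hsucc : ((m + 1 : ℕ) : ℤ) + 1 = ((m + 2 : ℕ) : ℤ) := by push_cast; ring
    have hpred : ((m + 1 : ℕ) : ℤ) - 1 = (m : ℤ) := by push_cast; ring
    rw [hsucc, hpred]
    simp only [tau2T_natCast]
    exact det_tauMatrix_tSystem c m α β
end

section
/- Let F be a field and let τ assign to each (k,ℓ) ∈ ℤ² and (α,β,γ) ∈ ℤ³ an element τ_{k,ℓ}^{(α,β,γ)} of F. Assume: (i) τ_{k,ℓ}^{(α,β,γ)} = 0 whenever k < 0 or ℓ < 0, and τ_{k,ℓ}^{(α,β,γ)} ≠ 0 whenever k ≥ 0 and ℓ ≥ 0; (ii) τ_{0,ℓ}^{(α,β,γ)} does not depend on α, i.e., τ_{0,ℓ}^{(α,β,γ)} = τ_{0,ℓ}^{(α',β,γ)} for all α, α'; (iii) for all k, ℓ, α, β, γ ∈ ℤ the three three-term relations hold: (A) τ_{k,ℓ−1}^{(α+1,β,γ)} τ_{k,ℓ}^{(α,β,γ)} = τ_{k,ℓ−1}^{(α,β,γ)}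 τ_{k,ℓ}^{(α+1,β,γ)} + τ_{k+1,ℓ}^{(α,β,γ)} τ_{k−1,ℓ−1}^{(α+1,β,γ)}; (B) τ_{k+1,ℓ−1}^{(α,β+1,γ)} τ_{k,ℓ}^{(α,β,γ)} + τ_{k,ℓ−1}^{(α,β,γ)} τ_{k+1,ℓ}^{(α,β+1,γ)} = τ_{k+1,ℓ}^{(α,β,γ)} τ_{k,ℓ−1}^{(α,β+1,γ)}; (C) τ_{k−1,ℓ−1}^{(α,β,γ)} τ_{k,ℓ+1}^{(α,β,γ+1)} + τ_{k−1,ℓ}^{(α,β,γ)} τ_{k,ℓ}^{(α,β,γ+1)} = τ_{k−1,ℓ}^{(α,β,γ+1)} τ_{k,ℓ}^{(α,β,γ)}; and (iv) for all k ≥ 0, ℓ ≥ 0 and all α, β, γ ∈ ℤ the degree-six identity holds: − τ_{k,ℓ−1}^{(α,β,γ)} τ_{k,ℓ}^{(α+1,β,γ)} τ_{k,ℓ}^{(α+1,β+1,γ)} τ_{k,ℓ}^{(α+1,β+1,γ+1)} τ_{k+1,ℓ}^{(α,β+1,γ+1)} τ_{k+2,ℓ+1}^{(α,β,γ+1)}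 + τ_{k−1,ℓ−1}^{(α+1,β+1,γ)} τ_{k,ℓ}^{(α+1,β,γ)} τ_{k+1,ℓ}^{(α,β,γ)} τ_{k+1,ℓ}^{(α,β,γ+1)} τ_{k+1,ℓ}^{(α,β+1,γ+1)} τ_{k+1,ℓ+1}^{(α+1,β+1,γ+1)} − τ_{k−1,ℓ}^{(α+1,β,γ)} τ_{k,ℓ}^{(α+1,β+1,γ+1)} τ_{k+1,ℓ}^{(α,β,γ)} τ_{k+1,ℓ}^{(α,β,γ+1)} τ_{k+1,ℓ}^{(α,β+1,γ+1)} τ_{k+1,ℓ}^{(α+1,β+1,γ)} + τ_{k,ℓ}^{(α,β+1,γ+1)} τ_{k,ℓ}^{(α+1,β,γ)} τ_{k,ℓ}^{(α+1,β+1,γ)} τ_{k+1,ℓ}^{(α,β,γ)} τ_{k+1,ℓ}^{(α,β,γ+1)} τ_{k+1,ℓ}^{(α+1,β+1,γ+1)} + τ_{k,ℓ}^{(α,β,γ+1)} τ_{k,ℓ}^{(α+1,β,γ)} τ_{k,ℓ}^{(α+1,β+1,γ)} τ_{k,ℓ}^{(α+1,β+1,γ+1)} τ_{k+1,ℓ}^{(α,β,γ)}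 τ_{k+2,ℓ}^{(α,β+1,γ+1)} − τ_{k,ℓ}^{(α,β,γ)} τ_{k,ℓ}^{(α+1,β+1,γ)} τ_{k,ℓ}^{(α+1,β+1,γ+1)} τ_{k+1,ℓ}^{(α,β,γ+1)} τ_{k+1,ℓ}^{(α,β+1,γ+1)} τ_{k+1,ℓ}^{(α+1,β,γ)} = 0. Then for all k ≥ 0, ℓ ≥ 0 and all α, β, γ ∈ ℤ the four-term relation holds: τ_{k,ℓ}^{(α,β,γ)} τ_{k,ℓ}^{(α+1,β+1,γ+1)} = τ_{k,ℓ}^{(α+1,β,γ)} τ_{k,ℓ}^{(α,β+1,γ+1)} + τ_{k+1,ℓ+1}^{(α,β+1,γ+1)} τ_{k−1,ℓ−1}^{(α+1,β,γ)} − τ_{k+1,ℓ}^{(α,β+1,γ+1)} τ_{k−1,ℓ}^{(α+1,β,γ)}. -/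
/-!
Write `D k` for the defect `LHS − RHS` of the four-term relation at level `k` (with `ℓ, α, β, γ`
fixed). Once the three-term relations (A), (B), (C) are substituted into it, the degree-six
identity at level `k` becomes `M · D (k + 1) = N · D k`, where `M` is a product of four
tau-functions at nonnegative indices, hence nonzero. At `k = 0` the defect vanishes because
`τ_{-1,·} = 0` and `τ_{0,ℓ}` does not depend on `α`, so `D k = 0` for all `k ≥ 0` by induction.
-/

namespace ThreeT

variable {F : Type*} [Field F] (τ : ℤ → ℤ → ℤ → ℤ → ℤ → F)

def fourTermDefect (k ℓ α β γ : ℤ) : F :=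
  τ k ℓ α β γ * τ k ℓ (α + 1) (β + 1) (γ + 1)
    - (τ k ℓ (α + 1) β γ * τ k ℓ α (β + 1) (γ + 1)
      + τ (k + 1) (ℓ + 1) α (β + 1) (γ + 1) * τ (k - 1) (ℓ - 1) (α + 1) β γ
      - τ (k + 1) ℓ α (β + 1) (γ + 1) * τ (k - 1) ℓ (α + 1) β γ)

def degSixDefect (k ℓ α β γ : ℤ) : F :=
  - (τ k (ℓ - 1) α β γ * τ k ℓ (α + 1) β γ * τ k ℓ (α + 1) (β + 1) γ *
      τ k ℓ (α + 1) (β + 1) (γ + 1) * τ (k + 1) ℓ α (β + 1) (γ + 1) *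
      τ (k + 2) (ℓ + 1) α β (γ + 1))
  + τ (k - 1) (ℓ - 1) (α + 1) (β + 1) γ * τ k ℓ (α + 1) β γ *
      τ (k + 1) ℓ α β γ * τ (k + 1) ℓ α β (γ + 1) *
      τ (k + 1) ℓ α (β + 1) (γ + 1) * τ (k + 1) (ℓ + 1) (α + 1) (β + 1) (γ + 1)
  - τ (k - 1) ℓ (α + 1) β γ * τ k ℓ (α + 1) (β + 1) (γ + 1) *
      τ (k + 1) ℓ α β γ * τ (k + 1) ℓ α β (γ + 1) *
      τ (k + 1) ℓ α (β + 1) (γ + 1) * τ (k + 1) ℓ (α + 1) (β + 1) γ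
  + τ k ℓ α (β + 1) (γ + 1) * τ k ℓ (α + 1) β γ * τ k ℓ (α + 1) (β + 1) γ *
      τ (k + 1) ℓ α β γ * τ (k + 1) ℓ α β (γ + 1) *
      τ (k + 1) ℓ (α + 1) (β + 1) (γ + 1)
  + τ k ℓ α β (γ + 1) * τ k ℓ (α + 1) β γ * τ k ℓ (α + 1) (β + 1) γ *
      τ k ℓ (α + 1) (β + 1) (γ + 1) * τ (k + 1) ℓ α β γ *
      τ (k + 2) ℓ α (β + 1) (γ + 1)
  - τ k ℓ α β γ * τ k ℓ (α + 1) (β + 1) γ * τ k ℓ (α + 1) (β + 1) (γ + 1) *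
      τ (k + 1) ℓ α β (γ + 1) * τ (k + 1) ℓ α (β + 1) (γ + 1) *
      τ (k + 1) ℓ (α + 1) β γ

variable {τ}

theorem fourTermDefect_zero (hneg : ∀ ℓ α β γ : ℤ, τ (-1) ℓ α β γ = 0)
    (halpha : ∀ ℓ α α' β γ : ℤ, τ 0 ℓ α β γ = τ 0 ℓ α' β γ) (ℓ α β γ : ℤ) :
    fourTermDefect τ 0 ℓ α β γ = 0 := by
  simp only [fourTermDefect, zero_sub, hneg, mul_zero, add_zero, sub_zero]
  rw [halpha ℓ α (α + 1) β γ, halpha ℓ α (α + 1) (β + 1) (γ + 1), mul_comm, sub_self]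

theorem degSixDefect_eq
    (hA : ∀ k ℓ α β γ : ℤ,
      τ k (ℓ - 1) (α + 1) β γ * τ k ℓ α β γ
      = τ k (ℓ - 1) α β γ * τ k ℓ (α + 1) β γ
        + τ (k + 1) ℓ α β γ * τ (k - 1) (ℓ - 1) (α + 1) β γ)
    (hB : ∀ k ℓ α β γ : ℤ,
      τ (k + 1) (ℓ - 1) α (β + 1) γ * τ k ℓ α β γ
        + τ k (ℓ - 1) α β γ * τ (k + 1) ℓ α (β + 1) γ
      = τ (k + 1) ℓ α β γ * τ k (ℓ - 1) α (β + 1) γ)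
    (hC : ∀ k ℓ α β γ : ℤ,
      τ (k - 1) (ℓ - 1) α β γ * τ k (ℓ + 1) α β (γ + 1)
        + τ (k - 1) ℓ α β γ * τ k ℓ α β (γ + 1)
      = τ (k - 1) ℓ α β (γ + 1) * τ k ℓ α β γ)
    (k ℓ α β γ : ℤ) :
    degSixDefect τ k ℓ α β γ
      = τ (k + 1) ℓ α β (γ + 1) * τ k ℓ α β γ * τ k ℓ (α + 1) (β + 1) γ *
          τ k ℓ (α + 1) (β + 1) (γ + 1) * fourTermDefect τ (k + 1) ℓ α β γ
        - τ (k + 1) ℓ α β (γ + 1) * τ (k + 1) ℓ α β γ * τ k ℓ (α + 1) (β + 1) γ *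
          τ (k + 1) ℓ (α + 1) (β + 1) (γ + 1) * fourTermDefect τ k ℓ α β γ := by
  unfold degSixDefect fourTermDefect
  linear_combination (norm := ring_nf)
    (τ k (ℓ - 1) α β γ * τ k ℓ (α + 1) β γ * τ k ℓ (α + 1) (β + 1) γ *
        τ k ℓ (α + 1) (β + 1) (γ + 1)) *
      hB (k + 1) (ℓ + 1) α β (γ + 1)
    - (τ k ℓ (α + 1) β γ * τ k ℓ (α + 1) (β + 1) γ *
        τ k ℓ (α + 1) (β + 1) (γ + 1) * τ (k + 2) ℓ α (β + 1) (γ + 1)) *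
      hC (k + 1) ℓ α β γ
    + (τ (k + 1) ℓ α β (γ + 1) * τ k ℓ (α + 1) (β + 1) γ *
        τ k ℓ (α + 1) (β + 1) (γ + 1) * τ (k + 2) (ℓ + 1) α (β + 1) (γ + 1)) *
      hA k ℓ α β γ
    + (τ (k + 1) ℓ α β (γ + 1) * τ (k + 1) ℓ α β γ *
        τ (k - 1) ℓ (α + 1) β γ * τ (k + 1) ℓ α (β + 1) (γ + 1)) *
      hC (k + 1) ℓ (α + 1) (β + 1) γ
    - (τ (k + 1) ℓ α β (γ + 1) * τ (k + 1) ℓ α β γ *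
        τ (k - 1) (ℓ - 1) (α + 1) β γ * τ k ℓ (α + 1) (β + 1) γ) *
      hA (k + 1) (ℓ + 1) α (β + 1) (γ + 1)
    - (τ (k + 1) ℓ α β (γ + 1) * τ (k + 1) ℓ α β γ *
        τ (k + 1) ℓ α (β + 1) (γ + 1) * τ (k + 1) (ℓ + 1) (α + 1) (β + 1) (γ + 1)) *
      hB (k - 1) ℓ (α + 1) β γ

end ThreeT

open ThreeT

/-- The α-direction four-term 3T-system relation for the `GL∞^(3)` tau-functions,
deduced from vanishing/nonvanishing, α-independence of `τ_{0,ℓ}`, the three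
three-term relations, and the degree-six identity. -/
theorem threeT_alpha_four_term
    (F : Type*) [Field F] (τ : ℤ → ℤ → ℤ → ℤ → ℤ → F)
    (hzero : ∀ k ℓ α β γ : ℤ, (k < 0 ∨ ℓ < 0) → τ k ℓ α β γ = 0)
    (hne : ∀ k ℓ α β γ : ℤ, 0 ≤ k → 0 ≤ ℓ → τ k ℓ α β γ ≠ 0)
    (halpha : ∀ ℓ α α' β γ : ℤ, τ 0 ℓ α β γ = τ 0 ℓ α' β γ)
    (hA : ∀ k ℓ α β γ : ℤ,
      τ k (ℓ - 1) (α + 1) β γ * τ k ℓ α β γ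
      = τ k (ℓ - 1) α β γ * τ k ℓ (α + 1) β γ
        + τ (k + 1) ℓ α β γ * τ (k - 1) (ℓ - 1) (α + 1) β γ)
    (hB : ∀ k ℓ α β γ : ℤ,
      τ (k + 1) (ℓ - 1) α (β + 1) γ * τ k ℓ α β γ
        + τ k (ℓ - 1) α β γ * τ (k + 1) ℓ α (β + 1) γ
      = τ (k + 1) ℓ α β γ * τ k (ℓ - 1) α (β + 1) γ)
    (hC : ∀ k ℓ α β γ : ℤ,
      τ (k - 1) (ℓ - 1) α β γ * τ k (ℓ + 1) α β (γ + 1)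
        + τ (k - 1) ℓ α β γ * τ k ℓ α β (γ + 1)
      = τ (k - 1) ℓ α β (γ + 1) * τ k ℓ α β γ)
    (hdeg6 : ∀ k ℓ : ℤ, 0 ≤ k → 0 ≤ ℓ → ∀ α β γ : ℤ,
      - (τ k (ℓ - 1) α β γ * τ k ℓ (α + 1) β γ * τ k ℓ (α + 1) (β + 1) γ *
          τ k ℓ (α + 1) (β + 1) (γ + 1) * τ (k + 1) ℓ α (β + 1) (γ + 1) *
          τ (k + 2) (ℓ + 1) α β (γ + 1))
      + τ (k - 1) (ℓ - 1) (α + 1) (β + 1) γ * τ k ℓ (α + 1) β γ *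
          τ (k + 1) ℓ α β γ * τ (k + 1) ℓ α β (γ + 1) *
          τ (k + 1) ℓ α (β + 1) (γ + 1) * τ (k + 1) (ℓ + 1) (α + 1) (β + 1) (γ + 1)
      - τ (k - 1) ℓ (α + 1) β γ * τ k ℓ (α + 1) (β + 1) (γ + 1) *
          τ (k + 1) ℓ α β γ * τ (k + 1) ℓ α β (γ + 1) *
          τ (k + 1) ℓ α (β + 1) (γ + 1) * τ (k + 1) ℓ (α + 1) (β + 1) γ
      + τ k ℓ α (β + 1) (γ + 1) * τ k ℓ (α + 1) β γ * τ k ℓ (α + 1) (β + 1) γ *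
          τ (k + 1) ℓ α β γ * τ (k + 1) ℓ α β (γ + 1) *
          τ (k + 1) ℓ (α + 1) (β + 1) (γ + 1)
      + τ k ℓ α β (γ + 1) * τ k ℓ (α + 1) β γ * τ k ℓ (α + 1) (β + 1) γ *
          τ k ℓ (α + 1) (β + 1) (γ + 1) * τ (k + 1) ℓ α β γ *
          τ (k + 2) ℓ α (β + 1) (γ + 1)
      - τ k ℓ α β γ * τ k ℓ (α + 1) (β + 1) γ * τ k ℓ (α + 1) (β + 1) (γ + 1) *
          τ (k + 1) ℓ α β (γ + 1) * τ (k + 1) ℓ α (β + 1) (γ + 1) *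
          τ (k + 1) ℓ (α + 1) β γ
      = 0) :
    ∀ k ℓ : ℤ, 0 ≤ k → 0 ≤ ℓ → ∀ α β γ : ℤ,
      τ k ℓ α β γ * τ k ℓ (α + 1) (β + 1) (γ + 1)
      = τ k ℓ (α + 1) β γ * τ k ℓ α (β + 1) (γ + 1)
        + τ (k + 1) (ℓ + 1) α (β + 1) (γ + 1) * τ (k - 1) (ℓ - 1) (α + 1) β γ
        - τ (k + 1) ℓ α (β + 1) (γ + 1) * τ (k - 1) ℓ (α + 1) β γ := by
  intro k ℓ hk hℓ α β γ
  suffices h : fourTermDefect τ k ℓ α β γ = 0 from sub_eq_zero.mp h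
  induction k, hk using Int.leInduction with
  | base =>
    exact fourTermDefect_zero (fun ℓ α β γ ↦ hzero _ ℓ α β γ (.inl (by norm_num))) halpha ℓ α β γ
  | succ k hk ih =>
    have hM : τ (k + 1) ℓ α β (γ + 1) * τ k ℓ α β γ * τ k ℓ (α + 1) (β + 1) γ *
        τ k ℓ (α + 1) (β + 1) (γ + 1) ≠ 0 := by
      have hk' : 0 ≤ k + 1 := by omega
      exact mul_ne_zero (mul_ne_zero (mul_ne_zero (hne _ _ _ _ _ hk' hℓ) (hne _ _ _ _ _ hk hℓ))
        (hne _ _ _ _ _ hk hℓ)) (hne _ _ _ _ _ hk hℓ)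
    have h6 := degSixDefect_eq hA hB hC k ℓ α β γ
    rw [show degSixDefect τ k ℓ α β γ = 0 from hdeg6 k ℓ hk hℓ α β γ, ih, mul_zero, sub_zero] at h6
    exact (mul_eq_zero.mp h6.symm).resolve_left hM
end
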